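/- arXiv:2301.07566 — 3 statements merged into one kernel-verified Lean document; each statement's English description precedes it below -/
import Mathlib

section
/- Let W : ZMod 2 → Y → ℝ≥0 and W' : ZMod 2 → Y' → ℝ≥0 be binary-input discrete memoryless channels with finite output alphabets Y and Y'. If W is degraded with respect to W', then Z(W) ≥ Z(W'), where Z denotes the Bhattacharyya parameter. -/
open Finset

/-- A binary-input discrete memoryless channel: the outputs sum to 1 for each input. -/
def IsBDMC {Y : Type*} [Fintype Y] (W : ZMod 2 → Y → NNReal) : Prop :=
  ∀ u : ZMod 2, ∑ y, W u y = 1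

/-- `W` is degraded with respect to `W'`. -/
def Degraded {Y Y' : Type*} [Fintype Y] [Fintype Y'] (W : ZMod 2 → Y → NNReal)
    (W' : ZMod 2 → Y' → NNReal) : Prop :=
  ∃ P : Y' → Y → NNReal, (∀ y', ∑ y, P y' y = 1) ∧
    ∀ (u : ZMod 2) (y : Y), W u y = ∑ y', W' u y' * P y' y

/-- The Bhattacharyya parameter of a B-DMC. -/
noncomputable def bhattacharyya {Y : Type*} [Fintype Y] (W : ZMod 2 → Y → NNReal) : NNReal :=
  ∑ y, NNReal.sqrt (W 0 y * W 1 y)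

/-! Since the rows of the degrading kernel `P` sum to one, `√(p q) = ∑_y √(p P) · √(q P)`;
Cauchy–Schwarz in the sum over `y'` then shows that pushing two weight functions through a
stochastic kernel can only increase their overlap `∑ √(p q)`. -/

open NNReal

lemma NNReal.sqrt_mul_mul_right (a b c : ℝ≥0) :
    sqrt (a * b) * c = sqrt (a * c) * sqrt (b * c) := by
  rw [← sqrt_mul, mul_mul_mul_comm, sqrt_mul (a * b), sqrt_mul_self]

theorem sum_sqrt_mul_le_sum_sqrt_mul_of_stochastic {Y Y' : Type*} [Fintype Y] [Fintype Y']
    (p q : Y' → ℝ≥0) (P : Y' → Y → ℝ≥0) (hP : ∀ y', ∑ y, P y' y = 1) :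
    ∑ y', sqrt (p y' * q y') ≤
      ∑ y, sqrt ((∑ y', p y' * P y' y) * ∑ y', q y' * P y' y) :=
  calc ∑ y', sqrt (p y' * q y')
      = ∑ y', sqrt (p y' * q y') * ∑ y, P y' y := by simp only [hP, mul_one]
    _ = ∑ y, ∑ y', sqrt (p y' * P y' y) * sqrt (q y' * P y' y) := by
        simp only [mul_sum]
        rw [sum_comm]
        exact sum_congr rfl fun y _ => sum_congr rfl fun y' _ => sqrt_mul_mul_right _ _ _
    _ ≤ ∑ y, sqrt (∑ y', p y' * P y' y) * sqrt (∑ y', q y' * P y' y) :=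
        sum_le_sum fun y _ => sum_sqrt_mul_sqrt_le _ _ _
    _ = ∑ y, sqrt ((∑ y', p y' * P y' y) * ∑ y', q y' * P y' y) := by simp only [sqrt_mul]

theorem bhattacharyya_ge_of_degraded_general {Y Y' : Type*} [Fintype Y] [Fintype Y']
    (W : ZMod 2 → Y → NNReal) (W' : ZMod 2 → Y' → NNReal)
    (h : Degraded W W') :
    bhattacharyya W' ≤ bhattacharyya W := by
  obtain ⟨P, hP, hWP⟩ := h
  simpa only [bhattacharyya, hWP] using
    sum_sqrt_mul_le_sum_sqrt_mul_of_stochastic (W' 0) (W' 1) P hP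

theorem bhattacharyya_ge_of_degraded {Y Y' : Type*} [Fintype Y] [Fintype Y']
    (W : ZMod 2 → Y → NNReal) (W' : ZMod 2 → Y' → NNReal)
    (hW : IsBDMC W) (hW' : IsBDMC W') (h : Degraded W W') :
    bhattacharyya W' ≤ bhattacharyya W :=
  bhattacharyya_ge_of_degraded_general W W' h
end

section
/- Let W : ZMod 2 → Y → ℝ≥0 and W' : ZMod 2 → Y' → ℝ≥0 be binary-input discrete memoryless channels with finite output alphabets. If W is degraded with respect to W', then the minus-polarized channel W⁻ is degraded with respect to W'⁻, where W⁻ : ZMod 2 → (Y × Y) → ℝ≥0 is defined by W⁻(u₁)(y₁, y₂) = (1/2) · ∑_{u₂ ∈ ZMod 2} W(u₁ + u₂)(y₁) · W(u₂)(y₂). -/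
open Finset

/-- The minus-polarized channel `W⁻`. -/
noncomputable def minusChannel {Y : Type*} [Fintype Y] (W : ZMod 2 → Y → NNReal) :
    ZMod 2 → Y × Y → NNReal :=
  fun u₁ y => (1 / 2 : NNReal) * ∑ u₂ : ZMod 2, W (u₁ + u₂) y.1 * W u₂ y.2

/-! If `W` is `W'` followed by the kernel `P`, then `W⁻` is `W'⁻` followed by `P` applied to each
of its two outputs independently, since each output of `W⁻` comes from its own use of `W`. -/

section ProdKernel

variable {Y Y' : Type*} [Fintype Y]

def prodKernel (P : Y' → Y → NNReal) : Y' × Y' → Y × Y → NNReal :=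
  fun y' y => P y'.1 y.1 * P y'.2 y.2

theorem sum_prodKernel_eq_one {P : Y' → Y → NNReal} (hP : ∀ y', ∑ y, P y' y = 1)
    (y' : Y' × Y') : ∑ y, prodKernel P y' y = 1 := by
  simp only [prodKernel, Fintype.sum_prod_type, ← mul_sum, hP, mul_one]

theorem minusChannel_eq_sum_prodKernel [Fintype Y'] {W : ZMod 2 → Y → NNReal}
    {W' : ZMod 2 → Y' → NNReal} {P : Y' → Y → NNReal}
    (hWP : ∀ u y, W u y = ∑ y', W' u y' * P y' y) (u : ZMod 2) (y : Y × Y) :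
    minusChannel W u y = ∑ y', minusChannel W' u y' * prodKernel P y' y := by
  calc minusChannel W u y
      = 1 / 2 * ∑ u₂, ∑ a, ∑ b, W' (u + u₂) a * W' u₂ b * (P a y.1 * P b y.2) := by
        simp only [minusChannel, hWP, sum_mul_sum, mul_mul_mul_comm]
    _ = ∑ y', minusChannel W' u y' * prodKernel P y' y := by
        simp only [minusChannel, prodKernel, Fintype.sum_prod_type, mul_sum, sum_mul, mul_assoc]
        rw [sum_comm]
        exact sum_congr rfl fun _ _ => sum_comm

end ProdKernel

theorem minus_degraded_of_degraded_general {Y Y' : Type*} [Fintype Y] [Fintype Y']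
    (W : ZMod 2 → Y → NNReal) (W' : ZMod 2 → Y' → NNReal)
    (h : Degraded W W') :
    Degraded (minusChannel W) (minusChannel W') := by
  obtain ⟨P, hP, hWP⟩ := h
  exact ⟨prodKernel P, sum_prodKernel_eq_one hP, minusChannel_eq_sum_prodKernel hWP⟩

theorem minus_degraded_of_degraded {Y Y' : Type*} [Fintype Y] [Fintype Y']
    (W : ZMod 2 → Y → NNReal) (W' : ZMod 2 → Y' → NNReal)
    (hW : IsBDMC W) (hW' : IsBDMC W') (h : Degraded W W') :
    Degraded (minusChannel W) (minusChannel W') :=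
  minus_degraded_of_degraded_general W W' h
end

section
/- (Equation (6): piecewise formula for the LLR distance function) Let s, a ∈ ℤ and γ ∈ ℕ. Define R = (min over integers x with a + 2^γ ≤ x < a + 2^{γ+1} of |x − s|) − (min over integers x with a ≤ x < a + 2^γ of |x − s|). Then R = 2^γ if s < a; R = −2^γ if s ≥ a + 2^{γ+1}; and R = 2^γ − (s − a) − ⌊(s − a)/2^γ⌋ if a ≤ s < a + 2^{γ+1}, where ⌊·⌋ denotes integer floor division. -/
open Finset

/-! The distance from `s` to an integer interval `[l, u)` is `max (l - s) (s - (u - 1)) 0`, so `R` is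
a difference of two such piecewise linear expressions; on `[a, a + 2^(γ+1))` the floor quotient
`(s - a) / 2^γ` is just the indicator of the upper half, and the rest is linear case analysis. -/

lemma inf'_Ico_abs_sub (s l u : ℤ) (h : l < u) :
    (Ico l u).inf' (nonempty_Ico.mpr h) (fun x => |x - s|) = max (max (l - s) (s - (u - 1))) 0 := by
  apply le_antisymm
  · obtain ⟨x, hx, hxs⟩ : ∃ x ∈ Ico l u, |x - s| = max (max (l - s) (s - (u - 1))) 0 :=
      ⟨max l (min s (u - 1)), by simp only [mem_Ico]; omega, by rw [abs_eq_max_neg]; omega⟩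
    exact hxs ▸ inf'_le _ hx
  · refine le_inf' _ _ fun x hx => ?_
    rw [mem_Ico] at hx
    rw [abs_eq_max_neg]
    omega

lemma Int.fdiv_eq_ite_of_nonneg_of_lt_two_mul {n d : ℤ} (hn : 0 ≤ n) (h : n < 2 * d) :
    n.fdiv d = if n < d then 0 else 1 := by
  have hd : 0 < d := by omega
  rw [Int.fdiv_eq_ediv_of_nonneg _ hd.le, Int.ediv_eq_iff_of_pos hd]
  split_ifs <;> omega

/-- Equation (6): piecewise formula for the LLR distance function `R`, where the bit-0
set is the integer interval `[a, a + 2^γ)` and the bit-1 set is `[a + 2^γ, a + 2^(γ+1))`,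
and `Int.fdiv` is integer floor division. -/
theorem llr_distance_piecewise (s a : ℤ) (γ : ℕ) :
    let R : ℤ :=
      ((Finset.Ico (a + 2 ^ γ) (a + 2 ^ (γ + 1))).inf'
          (Finset.nonempty_Ico.mpr
            (by have h1 : (0:ℤ) < 2 ^ γ := by positivity
                have h2 : (2:ℤ) ^ (γ + 1) = 2 ^ γ * 2 := pow_succ 2 γ
                omega))
          fun x => |x - s|) -
      ((Finset.Ico a (a + 2 ^ γ)).inf'
          (Finset.nonempty_Ico.mpr
            (by have h1 : (0:ℤ) < 2 ^ γ := by positivity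
                omega))
          fun x => |x - s|)
    (s < a → R = 2 ^ γ) ∧
    (a + 2 ^ (γ + 1) ≤ s → R = -2 ^ γ) ∧
    (a ≤ s → s < a + 2 ^ (γ + 1) →
      R = 2 ^ γ - (s - a) - Int.fdiv (s - a) (2 ^ γ)) := by
  intro R
  have hd : (0 : ℤ) < 2 ^ γ := by positivity
  have h2d : (2 : ℤ) ^ (γ + 1) = 2 * 2 ^ γ := pow_succ' 2 γ
  have hR : R = max (max (a + 2 ^ γ - s) (s - (a + 2 ^ (γ + 1) - 1))) 0 -
      max (max (a - s) (s - (a + 2 ^ γ - 1))) 0 :=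
    congrArg₂ (· - ·) (inf'_Ico_abs_sub _ _ _ (by omega)) (inf'_Ico_abs_sub _ _ _ (by omega))
  refine ⟨fun _ => by omega, fun _ => by omega, fun has hsa => ?_⟩
  rw [Int.fdiv_eq_ite_of_nonneg_of_lt_two_mul (by omega) (by omega)]
  split_ifs <;> omega
end
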